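/- Let 𝒪₃ be the orbit of the reduction of the Bugeye root quadruple (−1,2,2,3) in (ℤ/3ℤ)⁴ under the subgroup of GL(4,ℤ/3ℤ) generated by the reductions mod 3 of the Apollonian generators S₁,S₂,S₃,S₄. Then 𝒪₃ has exactly 10 elements, and for each coordinate i ∈ {1,2,3,4}, exactly 4 of these 10 vectors have i-th coordinate equal to 0 (so the density β(3) of zero i-th coordinates in the orbit mod 3 equals 2/5). -/
import Mathlib

open Matrix

def apolloGen (R : Type*) [CommRing R] (i : Fin 4) : Matrix (Fin 4) (Fin 4) R :=
  Matrix.of fun j k => if j = i then (if k = i then -1 else 2) else (if j = k then 1 else 0)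

def apollonianGroupMod (R : Type*) [CommRing R] : Subgroup (Matrix (Fin 4) (Fin 4) R)ˣ :=
  Subgroup.closure {M : (Matrix (Fin 4) (Fin 4) R)ˣ | ∃ i, (M : Matrix (Fin 4) (Fin 4) R) = apolloGen R i}

def bugeyeOrbitMod3 : Set (Fin 4 → ZMod 3) :=
  {w | ∃ M ∈ apollonianGroupMod (ZMod 3),
    (M : Matrix (Fin 4) (Fin 4) (ZMod 3)).mulVec ![(-1 : ZMod 3), 2, 2, 3] = w}

def OrbF : Finset (Fin 4 → ZMod 3) :=
  { ![0,0,2,2], ![0,2,0,2], ![0,2,2,0], ![0,2,2,2], ![2,0,0,2],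
    ![2,0,2,0], ![2,0,2,2], ![2,2,0,0], ![2,2,0,2], ![2,2,2,0] }

lemma gen_sq : ∀ i : Fin 4, apolloGen (ZMod 3) i * apolloGen (ZMod 3) i = 1 := by decide

/-- the generator as a unit -/
def genU (i : Fin 4) : (Matrix (Fin 4) (Fin 4) (ZMod 3))ˣ :=
  ⟨apolloGen (ZMod 3) i, apolloGen (ZMod 3) i, gen_sq i, gen_sq i⟩

lemma genU_mem (i : Fin 4) : genU i ∈ apollonianGroupMod (ZMod 3) :=
  Subgroup.subset_closure ⟨i, rfl⟩

lemma gen_maps : ∀ i : Fin 4, ∀ w ∈ OrbF, (apolloGen (ZMod 3) i).mulVec w ∈ OrbF := by decide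

lemma mulVec_inj (M : (Matrix (Fin 4) (Fin 4) (ZMod 3))ˣ) :
    Function.Injective fun v => (M : Matrix (Fin 4) (Fin 4) (ZMod 3)).mulVec v := by
  apply Function.LeftInverse.injective
    (g := fun v => ((M⁻¹ : _) : Matrix (Fin 4) (Fin 4) (ZMod 3)).mulVec v)
  intro a
  show ((M⁻¹ : _) : Matrix (Fin 4) (Fin 4) (ZMod 3)) *ᵥ ((M : Matrix (Fin 4) (Fin 4) (ZMod 3)) *ᵥ a) = a
  rw [Matrix.mulVec_mulVec, ← Units.val_mul, inv_mul_cancel, Units.val_one, Matrix.one_mulVec]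

lemma closure_maps {M : (Matrix (Fin 4) (Fin 4) (ZMod 3))ˣ}
    (hM : M ∈ apollonianGroupMod (ZMod 3)) :
    ∀ w ∈ OrbF, (M : Matrix (Fin 4) (Fin 4) (ZMod 3)).mulVec w ∈ OrbF := by
  induction hM using Subgroup.closure_induction with
  | mem x hx => obtain ⟨i, hi⟩ := hx; rw [hi]; exact gen_maps i
  | one => intro w hw; simpa using hw
  | mul x y hx hy px py =>
      intro w hw
      have := px _ (py w hw)
      simpa [Matrix.mulVec_mulVec, Units.val_mul] using this
  | inv x hx px =>
      intro w hw
      have himg : OrbF.image (x : Matrix (Fin 4) (Fin 4) (ZMod 3)).mulVec = OrbF := by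
        apply Finset.eq_of_subset_of_card_le
        · intro u hu
          obtain ⟨a, ha, rfl⟩ := Finset.mem_image.mp hu
          exact px a ha
        · rw [Finset.card_image_of_injective _ (mulVec_inj x)]
      rw [← himg] at hw
      obtain ⟨a, ha, hax⟩ := Finset.mem_image.mp hw
      have : ((x⁻¹ : _) : Matrix (Fin 4) (Fin 4) (ZMod 3)).mulVec w = a := by
        rw [← hax, Matrix.mulVec_mulVec, ← Units.val_mul, inv_mul_cancel, Units.val_one, Matrix.one_mulVec]
      rw [this]; exact ha

lemma orbit_eq : bugeyeOrbitMod3 = ↑OrbF := by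
  ext w
  constructor
  · rintro ⟨M, hM, rfl⟩
    have hv : ![(-1 : ZMod 3), 2, 2, 3] ∈ OrbF := by decide
    exact closure_maps hM _ hv
  · intro hw
    have hw' : w ∈ OrbF := hw
    clear hw
    -- paths found by search: each w = S_{i_k} ⋯ S_{i_1} v
    have key : ∀ L : List (Fin 4),
        ∃ M ∈ apollonianGroupMod (ZMod 3),
          (M : Matrix (Fin 4) (Fin 4) (ZMod 3)) = (L.map (apolloGen (ZMod 3))).prod := by
      intro L
      induction L with
      | nil => exact ⟨1, one_mem _, by simp⟩
      | cons i t ih =>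
          obtain ⟨M, hM, hMe⟩ := ih
          exact ⟨genU i * M, mul_mem (genU_mem i) hM, by simp [Units.val_mul, genU, hMe]⟩
    fin_cases hw' <;>
    first
    | exact ⟨1, one_mem _, by decide⟩
    | (obtain ⟨M, hM, hMe⟩ := key [0]; exact ⟨M, hM, by rw [hMe]; decide⟩)
    | (obtain ⟨M, hM, hMe⟩ := key [1]; exact ⟨M, hM, by rw [hMe]; decide⟩)
    | (obtain ⟨M, hM, hMe⟩ := key [2]; exact ⟨M, hM, by rw [hMe]; decide⟩)
    | (obtain ⟨M, hM, hMe⟩ := key [3, 0]; exact ⟨M, hM, by rw [hMe]; decide⟩)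
    | (obtain ⟨M, hM, hMe⟩ := key [3, 1]; exact ⟨M, hM, by rw [hMe]; decide⟩)
    | (obtain ⟨M, hM, hMe⟩ := key [3, 2]; exact ⟨M, hM, by rw [hMe]; decide⟩)
    | (obtain ⟨M, hM, hMe⟩ := key [1, 3, 0]; exact ⟨M, hM, by rw [hMe]; decide⟩)
    | (obtain ⟨M, hM, hMe⟩ := key [2, 3, 0]; exact ⟨M, hM, by rw [hMe]; decide⟩)
    | (obtain ⟨M, hM, hMe⟩ := key [2, 3, 1]; exact ⟨M, hM, by rw [hMe]; decide⟩)

theorem stmt18 :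
    Set.ncard bugeyeOrbitMod3 = 10 ∧
    ∀ i : Fin 4, Set.ncard {w ∈ bugeyeOrbitMod3 | w i = 0} = 4 := by
  constructor
  · rw [orbit_eq, Set.ncard_coe_finset]
    decide
  · intro i
    have : {w ∈ bugeyeOrbitMod3 | w i = 0} = ↑(OrbF.filter (fun w => w i = 0)) := by
      rw [orbit_eq]; ext w; simp
    rw [this, Set.ncard_coe_finset]
    fin_cases i <;> decide
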